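/- Let P be a convex n-gon oriented counterclockwise and let Q be a polygon maximal degenerate in P. If Q' is any polygon with co(Q) ⊆ co(Q') ⊆ co(P) for which there exists an m-gon R with m < n and co(Q') ⊆ co(R) ⊆ co(P), then co(Q) = co(Q'). -/

import Mathlib

noncomputable section

abbrev Pt : Type := EuclideanSpace ℝ (Fin 2)

/-- Convex hull of the vertices of a polygon. -/
def hull {n : ℕ} (P : Fin n → Pt) : Set Pt := convexHull ℝ (Set.range P)

/-- `P'` is degenerately contained in the `n`-gon `P`: there is an interpolating
`m`-gon with `m < n`. -/
def DegenIn {k n : ℕ} (P' : Fin k → Pt) (P : Fin n → Pt) : Prop :=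
  ∃ m : ℕ, m < n ∧ ∃ Q : Fin m → Pt, hull P' ⊆ hull Q ∧ hull Q ⊆ hull P

/-- `P'` is obtained from `P` by a single pull-in move. -/
def PullIn {n : ℕ} (P P' : Fin n → Pt) : Prop :=
  ∃ i j : Fin n, i ≠ j ∧ P' i ∈ segment ℝ (P i) (P j) ∧ ∀ k, k ≠ i → P' k = P k

/-- `P'` is obtained from `P` by a single push-out move (the inverse of a pull-in). -/
def PushOut {n : ℕ} (P P' : Fin n → Pt) : Prop :=
  ∃ i j : Fin n, i ≠ j ∧ P i ∈ segment ℝ (P j) (P' i) ∧ ∀ k, k ≠ i → P' k = P k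

/-- A chain of exactly `m` moves (given by the relation `R`) from `P` to `P'`. -/
def MoveChain {n : ℕ} (R : (Fin n → Pt) → (Fin n → Pt) → Prop) (m : ℕ)
    (P P' : Fin n → Pt) : Prop :=
  ∃ Q : Fin (m + 1) → Fin n → Pt, Q 0 = P ∧ Q (Fin.last m) = P' ∧
    ∀ s : Fin m, R (Q s.castSucc) (Q s.succ)

/-- `P'` is attainable from `P` by a decreasing path of polygons. -/
def Attainable {n : ℕ} (P P' : Fin n → Pt) : Prop :=
  ∃ c : ℝ, 0 ≤ c ∧ ∃ F : ℝ → Fin n → Pt,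
    ContinuousOn F (Set.Icc 0 c) ∧ F 0 = P ∧ F c = P' ∧
    ∀ t t' : ℝ, t ∈ Set.Icc 0 c → t' ∈ Set.Icc 0 c → t ≤ t' → hull (F t') ⊆ hull (F t)

/-- Determinant of the 3×3 matrix with rows (a,1), (b,1), (c,1). -/
def det3 (a b c : Pt) : ℝ := (b 0 - a 0) * (c 1 - a 1) - (b 1 - a 1) * (c 0 - a 0)

/-- `P` is a convex polygon oriented counterclockwise. -/
def CCW {n : ℕ} [NeZero n] (P : Fin n → Pt) : Prop :=
  ∀ i j : Fin n, j ≠ i → j ≠ i + 1 → 0 < det3 (P i) (P (i + 1)) (P j)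

/-- The boundary of a polygon: the union of its edges. -/
def bdry {n : ℕ} [NeZero n] (P : Fin n → Pt) : Set Pt :=
  ⋃ i : Fin n, segment ℝ (P i) (P (i + 1))

/-- The threshold set of `P`: attainable polygons with a vertex on `∂P`. -/
def Threshold {n : ℕ} [NeZero n] (P : Fin n → Pt) : Set (Fin n → Pt) :=
  {P' | Attainable P P' ∧ ∃ i, P' i ∈ bdry P}

/-- A neighbor pull-in move: a pull-in of a vertex toward one of its two neighbors. -/
def NbrPullIn {n : ℕ} [NeZero n] (P P' : Fin n → Pt) : Prop :=
  ∃ i j : Fin n, (j = i - 1 ∨ j = i + 1) ∧ i ≠ j ∧ P' i ∈ segment ℝ (P i) (P j) ∧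
    ∀ k, k ≠ i → P' k = P k

/-- The vestibule of `P`: polygons one neighbor pull-in move away from the threshold. -/
def Vestibule {n : ℕ} [NeZero n] (P : Fin n → Pt) : Set (Fin n → Pt) :=
  {P' | ∃ Q ∈ Threshold P, NbrPullIn Q P'}

/-- A polygon is set-convex if no vertex lies in the convex hull of the others. -/
def SetConvex {n : ℕ} (P : Fin n → Pt) : Prop :=
  ∀ i : Fin n, P i ∉ convexHull ℝ (P '' {j | j ≠ i})

/-- A maximal degenerate `(n-1)`-gon inscribed in the convex `n`-gon `P`. -/
def MaxDegen {n : ℕ} [NeZero n] (P : Fin n → Pt) (Q : Fin (n - 1) → Pt) : Prop :=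
  (∀ k, Q k ∈ bdry P) ∧
  ∀ k : Fin (n - 1),
    (∃ i : Fin n, Q k = P i ∧ ∀ k' : Fin (n - 1), k' ≠ k → Q k' ≠ P i) ∨
    (∃ i : Fin n, Q k ∈ segment ℝ (P i) (P (i + 1)) ∧ (∀ j : Fin n, Q k ≠ P j) ∧
      ∀ k' : Fin (n - 1), k' ≠ k → Q k' ∉ segment ℝ (P i) (P (i + 1)))

/-- Area of a polygon: the Lebesgue measure of its convex hull. -/
def area {n : ℕ} (P : Fin n → Pt) : ℝ := (MeasureTheory.volume (hull P)).toReal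

/-- `P'` is in the midpoint pockets of `P`. -/
def MidpointPockets {n : ℕ} [NeZero n] (P P' : Fin n → Pt) : Prop :=
  ∀ i : Fin n,
    P' i ∈ convexHull ℝ
      ({midpoint ℝ (P (i - 1)) (P i), P i, midpoint ℝ (P i) (P (i + 1))} : Set Pt) ∧
    P i ∉ segment ℝ (midpoint ℝ (P (i - 1)) (P i)) (midpoint ℝ (P i) (P (i + 1)))

/-- A row stochastic matrix. -/
def RowStochastic {n : ℕ} (D : Matrix (Fin n) (Fin n) ℝ) : Prop :=
  (∀ i j, 0 ≤ D i j) ∧ ∀ i, ∑ j, D i j = 1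

/-- A continuous-time non-homogeneous Markov process of `n` states. -/
def IsMarkovProcess (n : ℕ) (M : ℝ → ℝ → Matrix (Fin n) (Fin n) ℝ) : Prop :=
  ContinuousOn (fun p : ℝ × ℝ => M p.1 p.2) {p : ℝ × ℝ | 0 ≤ p.1 ∧ p.1 ≤ p.2} ∧
  (∀ s t : ℝ, 0 ≤ s → s ≤ t → IsUnit (M s t).det ∧ RowStochastic (M s t)) ∧
  (∀ r s t : ℝ, 0 ≤ r → r ≤ s → s ≤ t → M r t = M r s * M s t) ∧
  (∀ t : ℝ, 0 ≤ t → M t t = 1)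

/-- An embeddable stochastic matrix. -/
def Embeddable {n : ℕ} (D : Matrix (Fin n) (Fin n) ℝ) : Prop :=
  ∃ M : ℝ → ℝ → Matrix (Fin n) (Fin n) ℝ, IsMarkovProcess n M ∧
    ∃ s t : ℝ, 0 ≤ s ∧ s ≤ t ∧ D = M s t

/-- The elementary stochastic matrix `K^{ij}(c)`. -/
def elemStoch {n : ℕ} (i j : Fin n) (c : ℝ) : Matrix (Fin n) (Fin n) ℝ :=
  1 + c • (Matrix.single i j 1 - Matrix.single i i 1)


/-!
Every vertex `Q k` of a maximal degenerate polygon lies on a half-open edge `[P i, P (i + 1))`,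
distinct vertices on distinct edges. Edges are faces of `co(P)`, so if `Q k ∈ co(R)` and
`co(R) ⊆ co(P)`, some vertex of `R` lies on the same edge at or before `Q k`, and some at or after
it. The former give `n - 1` distinct vertices of `R`, hence all of them. If one of them lies
strictly before `Q k`, the vertex of `R` at or after `Q k` can only be `P (i + 1)`, which is then
strictly before the vertex of `Q` on the next edge; going around, all `n` edges would carry one of
the `n - 1` vertices of `Q`. So `R` and `Q` have the same vertices, and
`co(Q) ⊆ co(Q') ⊆ co(R) = co(Q)`.
-/

open Set AffineMap

theorem ConcaveOn.mem_convexHull_sep_eq_zero {E : Type*} [AddCommGroup E] [Module ℝ E]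
    {s S : Set E} {f : E → ℝ} (hf : ConcaveOn ℝ s f) (hSs : S ⊆ s)
    (hS : ∀ y ∈ S, 0 ≤ f y) {x : E} (hx : x ∈ convexHull ℝ S) (hfx : f x ≤ 0) :
    x ∈ convexHull ℝ {y ∈ S | f y = 0} := by
  classical
  rw [convexHull_eq] at hx
  obtain ⟨ι, t, w, z, hw₀, hw₁, hz, rfl⟩ := hx
  have hJensen := hf.le_map_centerMass hw₀ (hw₁ ▸ one_pos) fun i hi => hSs (hz i hi)
  have hterm : ∀ i ∈ t, w i * f (z i) = 0 := by
    have hnonneg : ∀ i ∈ t, 0 ≤ w i * f (z i) := fun i hi =>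
      mul_nonneg (hw₀ i hi) (hS _ (hz i hi))
    refine (Finset.sum_eq_zero_iff_of_nonneg hnonneg).1
      (le_antisymm ?_ (Finset.sum_nonneg hnonneg))
    simpa [Finset.centerMass, hw₁] using hJensen.trans hfx
  rw [← Finset.centerMass_filter_ne_zero]
  refine Finset.centerMass_mem_convexHull _ (fun i hi => hw₀ i (Finset.filter_subset _ _ hi))
    (by rw [Finset.sum_filter_ne_zero, hw₁]; exact one_pos) fun i hi => ?_
  obtain ⟨hit, hwi⟩ := Finset.mem_filter.1 hi
  exact ⟨hz i hit, (mul_eq_zero.1 (hterm i hit)).resolve_left hwi⟩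

theorem exists_lineMap_mem_of_lineMap_mem_convexHull {E : Type*} [AddCommGroup E]
    [Module ℝ E] {a b : E} (hab : a ≠ b) {S : Set E} (hS : S ⊆ segment ℝ a b) {τ : ℝ}
    (hτ : lineMap a b τ ∈ convexHull ℝ S) :
    (∃ t ∈ Icc 0 τ, lineMap a b t ∈ S) ∧ ∃ t ∈ Icc τ 1, lineMap a b t ∈ S := by
  set U : Set ℝ := Icc 0 1 ∩ lineMap a b ⁻¹' S
  have hSU : S = lineMap a b '' U := by
    ext y
    refine ⟨fun hy => ?_, fun ⟨t, ⟨_, ht⟩, hty⟩ => hty ▸ ht⟩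
    obtain ⟨t, ht, rfl⟩ := segment_eq_image_lineMap ℝ a b ▸ hS hy
    exact ⟨t, ⟨ht, hy⟩, rfl⟩
  rw [hSU, ← AffineMap.image_convexHull] at hτ
  obtain ⟨τ', hτ', heq⟩ := hτ
  obtain rfl := lineMap_injective ℝ hab heq
  have hU := subset_convexHull ℝ U
  obtain ⟨t, ⟨ht, htS⟩, htτ⟩ :=
    (concaveOn_id (convex_convexHull ℝ U)).exists_le_of_mem_convexHull hU hτ'
  obtain ⟨t', ⟨ht', ht'S⟩, ht'τ⟩ :=
    (convexOn_id (convex_convexHull ℝ U)).exists_ge_of_mem_convexHull hU hτ'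
  exact ⟨⟨t, ⟨ht.1, htτ⟩, htS⟩, ⟨t', ⟨ht'τ, ht'.2⟩, ht'S⟩⟩

theorem det3_smul_add_smul {s t : ℝ} (hst : s + t = 1) (a b x y : Pt) :
    det3 a b (s • x + t • y) = s * det3 a b x + t * det3 a b y := by
  simp only [det3, PiLp.add_apply, PiLp.smul_apply, smul_eq_mul]
  linear_combination ((b 0 - a 0) * a 1 - (b 1 - a 1) * a 0) * hst

theorem det3_lineMap (a b x y : Pt) (t : ℝ) :
    det3 a b (lineMap x y t) = (1 - t) * det3 a b x + t * det3 a b y := by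
  rw [lineMap_apply_module, det3_smul_add_smul (sub_add_cancel 1 t)]

theorem det3_self (a c : Pt) : det3 a a c = 0 := by unfold det3; ring

theorem det3_self_left (a b : Pt) : det3 a b a = 0 := by unfold det3; ring

theorem det3_self_right (a b : Pt) : det3 a b b = 0 := by unfold det3; ring

theorem concaveOn_det3 (a b : Pt) : ConcaveOn ℝ univ (det3 a b) :=
  ⟨convex_univ, fun x _ y _ _ _ _ _ hst => (det3_smul_add_smul hst a b x y).ge⟩

namespace Fin

open Fin.NatCast

variable {n : ℕ} [NeZero n]

theorem add_natCast_ne_self {k : ℕ} (hk : 0 < k) (hkn : k < n) (i : Fin n) :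
    i + (k : Fin n) ≠ i := by
  rw [Ne, add_eq_left, Fin.natCast_eq_zero]
  exact fun h => (Nat.le_of_dvd hk h).not_gt hkn

theorem add_one_ne_self (hn : 2 ≤ n) (i : Fin n) : i + 1 ≠ i := by
  simpa using add_natCast_ne_self (k := 1) Nat.one_pos (by omega) i

theorem add_one_add_one_ne_self (hn : 3 ≤ n) (i : Fin n) : i + 1 + 1 ≠ i := by
  simpa [add_assoc, one_add_one_eq_two] using add_natCast_ne_self (k := 2) two_pos (by omega) i

theorem forall_of_imp_add_one {p : Fin n → Prop} (h : ∀ i, p i → p (i + 1)) {i₀ : Fin n}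
    (hi₀ : p i₀) (j : Fin n) : p j := by
  have key : ∀ m : ℕ, p (i₀ + m) := by
    intro m
    induction m with
    | zero => simpa using hi₀
    | succ m ih => simpa [add_assoc] using h _ ih
  simpa using key (j - i₀).val

end Fin

namespace CCW

variable {n : ℕ} [NeZero n] {P : Fin n → Pt}

theorem det3_nonneg (hP : CCW P) (i j : Fin n) : 0 ≤ det3 (P i) (P (i + 1)) (P j) := by
  by_cases h₁ : j = i
  · rw [h₁, det3_self_left]
  by_cases h₂ : j = i + 1
  · rw [h₂, det3_self_right]
  exact (hP i j h₁ h₂).le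

theorem det3_nonneg_of_mem_hull (hP : CCW P) {x : Pt} (hx : x ∈ hull P) (i : Fin n) :
    0 ≤ det3 (P i) (P (i + 1)) x := by
  obtain ⟨_, ⟨j, rfl⟩, hj⟩ :=
    (concaveOn_det3 _ _).exists_le_of_mem_convexHull (subset_univ _) hx
  exact (hP.det3_nonneg i j).trans hj

theorem mem_segment_of_det3_eq_zero (hP : CCW P) {x : Pt} (hx : x ∈ hull P) {i : Fin n}
    (h : det3 (P i) (P (i + 1)) x = 0) : x ∈ segment ℝ (P i) (P (i + 1)) := by
  have hface := (concaveOn_det3 (P i) (P (i + 1))).mem_convexHull_sep_eq_zero (subset_univ _)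
    (by rintro _ ⟨j, rfl⟩; exact hP.det3_nonneg i j) hx h.le
  rw [← convexHull_pair]
  refine convexHull_mono ?_ hface
  rintro _ ⟨⟨j, rfl⟩, hj⟩
  by_contra hne
  simp only [mem_insert_iff, mem_singleton_iff, not_or] at hne
  exact (hP i j (fun h => hne.1 (h ▸ rfl)) fun h => hne.2 (h ▸ rfl)).ne' hj

theorem det3_pos (hn : 3 ≤ n) (hP : CCW P) (i : Fin n) :
    0 < det3 (P i) (P (i + 1)) (P (i + 1 + 1)) :=
  hP i _ (Fin.add_one_add_one_ne_self hn i) (Fin.add_one_ne_self (by omega) (i + 1))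

theorem apply_ne_apply_add_one (hn : 3 ≤ n) (hP : CCW P) (i : Fin n) : P i ≠ P (i + 1) := by
  intro h
  have := hP.det3_pos hn i
  rw [h, det3_self] at this
  exact this.false

theorem lineMap_eq_lineMap (hn : 3 ≤ n) (hP : CCW P) {i j : Fin n} (hij : i ≠ j) {s t : ℝ}
    (hs : s ∈ Icc 0 1) (ht : t ∈ Ico 0 1)
    (h : lineMap (P i) (P (i + 1)) s = lineMap (P j) (P (j + 1)) t) :
    s = 1 ∧ t = 0 ∧ j = i + 1 := by
  have hzero : (1 - s) * det3 (P j) (P (j + 1)) (P i) + s * det3 (P j) (P (j + 1)) (P (i + 1))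
      = 0 := by
    rw [← det3_lineMap, h, det3_lineMap, det3_self_left, det3_self_right]; ring
  have hnonneg₁ := mul_nonneg (sub_nonneg.2 hs.2) (hP.det3_nonneg j i)
  have hnonneg₂ := mul_nonneg hs.1 (hP.det3_nonneg j (i + 1))
  by_cases hji : i = j + 1
  · subst hji
    have hs0 : s = 0 := by nlinarith [hP.det3_pos hn j]
    have : lineMap (P j) (P (j + 1)) t = lineMap (P j) (P (j + 1)) (1 : ℝ) := by
      rw [← h, hs0, lineMap_apply_zero, lineMap_apply_one]
    exact absurd (lineMap_injective ℝ (hP.apply_ne_apply_add_one hn j) this) ht.2.ne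
  · have hs1 : s = 1 := by nlinarith [hP j i hij hji]
    have hsucc : j = i + 1 := by
      by_contra hne
      have hpos := hP j (i + 1) (Ne.symm hne) fun h => hij (add_right_cancel h)
      nlinarith
    refine ⟨hs1, ?_, hsucc⟩
    have : lineMap (P j) (P (j + 1)) t = lineMap (P j) (P (j + 1)) (0 : ℝ) := by
      rw [← h, hs1, lineMap_apply_one, lineMap_apply_zero, hsucc]
    exact lineMap_injective ℝ (hP.apply_ne_apply_add_one hn j) this

theorem exists_lineMap_mem (hn : 3 ≤ n) (hP : CCW P) {T : Set Pt} (hT : T ⊆ hull P) {i : Fin n}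
    {τ : ℝ} (hτ : lineMap (P i) (P (i + 1)) τ ∈ convexHull ℝ T) :
    (∃ t ∈ Icc 0 τ, lineMap (P i) (P (i + 1)) t ∈ T) ∧
      ∃ t ∈ Icc τ 1, lineMap (P i) (P (i + 1)) t ∈ T := by
  have hface :
      lineMap (P i) (P (i + 1)) τ ∈ convexHull ℝ (T ∩ segment ℝ (P i) (P (i + 1))) := by
    have hsub : {y ∈ T | det3 (P i) (P (i + 1)) y = 0} ⊆ T ∩ segment ℝ (P i) (P (i + 1)) :=
      fun y hy => ⟨hy.1, hP.mem_segment_of_det3_eq_zero (hT hy.1) hy.2⟩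
    refine convexHull_mono hsub <| (concaveOn_det3 _ _).mem_convexHull_sep_eq_zero
      (subset_univ _) (fun y hy => hP.det3_nonneg_of_mem_hull (hT hy) i) hτ ?_
    rw [det3_lineMap, det3_self_left, det3_self_right, mul_zero, mul_zero, add_zero]
  obtain ⟨⟨t, ht, htT⟩, t', ht', ht'T⟩ := exists_lineMap_mem_of_lineMap_mem_convexHull
    (hP.apply_ne_apply_add_one hn i) inter_subset_right hface
  exact ⟨⟨t, ht, htT.1⟩, t', ht', ht'T.1⟩

end CCW

structure HalfEdgeCoords {n N : ℕ} [NeZero n] (P : Fin n → Pt) (Q : Fin N → Pt) where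
  edge : Fin N → Fin n
  param : Fin N → ℝ
  param_mem : ∀ k, param k ∈ Ico 0 1
  apply_eq : ∀ k, Q k = lineMap (P (edge k)) (P (edge k + 1)) (param k)
  edge_injective : Function.Injective edge
  apply_notMem_segment : ∀ k, 0 < param k → ∀ k' ≠ k,
    Q k' ∉ segment ℝ (P (edge k)) (P (edge k + 1))

theorem MaxDegen.nonempty_halfEdgeCoords {n : ℕ} [NeZero n] {P : Fin n → Pt}
    {Q : Fin (n - 1) → Pt} (hQ : MaxDegen P Q) : Nonempty (HalfEdgeCoords P Q) := by
  have key : ∀ k, ∃ i τ, τ ∈ Ico (0 : ℝ) 1 ∧ Q k = lineMap (P i) (P (i + 1)) τ ∧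
      (τ = 0 → ∀ k' ≠ k, Q k' ≠ Q k) ∧
      (0 < τ → ∀ k' ≠ k, Q k' ∉ segment ℝ (P i) (P (i + 1))) := by
    intro k
    rcases hQ.2 k with ⟨i, hki, huniq⟩ | ⟨i, hseg, hnv, hexcl⟩
    · exact ⟨i, 0, ⟨le_rfl, one_pos⟩, by rw [hki, lineMap_apply_zero],
        fun _ k' hk' => hki ▸ huniq k' hk', fun h => (lt_irrefl _ h).elim⟩
    · rw [segment_eq_image_lineMap] at hseg
      obtain ⟨τ, hτ, hτk⟩ := hseg
      have h0 : τ ≠ 0 := by rintro rfl; exact hnv i (by rw [← hτk, lineMap_apply_zero])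
      have h1 : τ ≠ 1 := by rintro rfl; exact hnv (i + 1) (by rw [← hτk, lineMap_apply_one])
      exact ⟨i, τ, ⟨hτ.1, hτ.2.lt_of_ne h1⟩, hτk.symm, fun h => (h0 h).elim,
        fun _ => hexcl⟩
  choose e τ hτ hQτ hvertex hedge using key
  refine ⟨⟨e, τ, hτ, hQτ, fun k k' hkk' => ?_, hedge⟩⟩
  have hmem : ∀ k, Q k ∈ segment ℝ (P (e k)) (P (e k + 1)) := fun k => by
    rw [hQτ, segment_eq_image_lineMap]; exact mem_image_of_mem _ (Ico_subset_Icc_self (hτ k))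
  by_contra hne
  rcases (hτ k).1.eq_or_lt with h0 | hpos
  · rcases (hτ k').1.eq_or_lt with h0' | hpos'
    · exact hvertex k h0.symm k' (Ne.symm hne) (by rw [hQτ, hQτ, ← h0, ← h0', hkk'])
    · exact hedge k' hpos' k hne (hkk' ▸ hmem k)
  · exact hedge k hpos k' (Ne.symm hne) (hkk' ▸ hmem k')

namespace HalfEdgeCoords

variable {n N : ℕ} [NeZero n] {P : Fin n → Pt} {Q : Fin N → Pt}

def pointAt (c : HalfEdgeCoords P Q) (t : Fin N → ℝ) (k : Fin N) : Pt :=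
  lineMap (P (c.edge k)) (P (c.edge k + 1)) (t k)

theorem pointAt_param (c : HalfEdgeCoords P Q) : c.pointAt c.param = Q :=
  funext fun k => (c.apply_eq k).symm

theorem injective_pointAt (c : HalfEdgeCoords P Q) (hn : 3 ≤ n) (hP : CCW P) {t : Fin N → ℝ}
    (ht : ∀ k, t k ∈ Ico 0 1) : Function.Injective (c.pointAt t) := by
  intro k k' h
  by_contra hne
  exact (ht k).2.ne (hP.lineMap_eq_lineMap hn (c.edge_injective.ne hne)
    (Ico_subset_Icc_self (ht k)) (ht k') h).1

theorem exists_edge_eq_add_one (c : HalfEdgeCoords P Q) (hn : 3 ≤ n) (hP : CCW P)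
    {t : Fin N → ℝ} (ht : ∀ k, t k ∈ Icc 0 (c.param k))
    (htP : range (c.pointAt t) ⊆ hull P)
    (hQt : ∀ k, Q k ∈ convexHull ℝ (range (c.pointAt t))) {k : Fin N} (hk : t k < c.param k) :
    ∃ k', c.edge k' = c.edge k + 1 ∧ t k' < c.param k' := by
  obtain ⟨-, t', ht', k', hk'⟩ := hP.exists_lineMap_mem hn htP (c.apply_eq k ▸ hQt k)
  have htk' : t k' ∈ Ico 0 1 := ⟨(ht k').1, (ht k').2.trans_lt (c.param_mem k').2⟩
  by_cases he : c.edge k = c.edge k'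
  · obtain rfl := c.edge_injective he
    have := lineMap_injective ℝ (hP.apply_ne_apply_add_one hn _) hk'
    linarith [ht'.1]
  · obtain ⟨-, ht0, hsucc⟩ := hP.lineMap_eq_lineMap hn he
      ⟨(c.param_mem k).1.trans ht'.1, ht'.2⟩ htk' hk'.symm
    refine ⟨k', hsucc, (ht k').2.lt_of_ne fun heq => ?_⟩
    refine c.apply_notMem_segment k ((ht k).1.trans_lt hk) k' (fun h => he (h ▸ rfl)) ?_
    rw [c.apply_eq k', ← heq, ht0, lineMap_apply_zero, hsucc]
    exact right_mem_segment ℝ _ _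

theorem range_eq (c : HalfEdgeCoords P Q) (hn : 3 ≤ n) (hP : CCW P) (hN : N < n) {S : Set Pt}
    (hS : S.Finite) (hSP : S ⊆ hull P) (hSN : S.ncard ≤ N)
    (hQS : ∀ k, Q k ∈ convexHull ℝ S) :
    range Q = S := by
  choose t ht htS using fun k => (hP.exists_lineMap_mem hn hSP (c.apply_eq k ▸ hQS k)).1
  have hinj := c.injective_pointAt hn hP fun k =>
    ⟨(ht k).1, (ht k).2.trans_lt (c.param_mem k).2⟩
  obtain rfl : range (c.pointAt t) = S := eq_of_subset_of_ncard_le (range_subset_iff.2 htS)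
    (by rwa [ncard_range_of_injective hinj, Nat.card_eq_fintype_card, Fintype.card_fin]) hS
  have ht_eq : t = c.param := by
    -- otherwise every edge of `P` would carry a vertex of `Q`
    by_contra hne
    obtain ⟨k₀, hk₀⟩ := Function.ne_iff.1 hne
    have hall := Fin.forall_of_imp_add_one (p := fun i => ∃ k, c.edge k = i ∧ t k < c.param k)
      (fun _ ⟨k, hk, hlt⟩ => hk ▸ c.exists_edge_eq_add_one hn hP ht hSP hQS hlt)
      ⟨k₀, rfl, (ht k₀).2.lt_of_ne hk₀⟩
    choose g hg using hall
    have := Fintype.card_le_of_injective g fun a b h => by rw [← (hg a).1, ← (hg b).1, h]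
    simp only [Fintype.card_fin] at this
    omega
  rw [ht_eq, pointAt_param]

end HalfEdgeCoords

theorem statement9_general (n : ℕ) (hn : 3 ≤ n) [NeZero n] (P : Fin n → Pt) (hP : CCW P)
    (Q : Fin (n - 1) → Pt) (hQ : MaxDegen P Q)
    (N : ℕ) (Q' : Fin N → Pt)
    (h1 : hull Q ⊆ hull Q')
    (hdeg : ∃ m : ℕ, m < n ∧ ∃ R : Fin m → Pt, hull Q' ⊆ hull R ∧ hull R ⊆ hull P) :
    hull Q = hull Q' := by
  obtain ⟨m, hm, R, hQ'R, hRP⟩ := hdeg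
  obtain ⟨c⟩ := hQ.nonempty_halfEdgeCoords
  have hrange : range Q = range R := by
    refine c.range_eq hn hP (by omega) (finite_range R) ((subset_convexHull ℝ _).trans hRP) ?_
      fun k => hQ'R (h1 (subset_convexHull ℝ _ (mem_range_self k)))
    rw [← image_univ]
    exact (ncard_image_le finite_univ).trans (by simp; omega)
  have hRQ : hull R = hull Q := by rw [hull, hull, hrange]
  exact h1.antisymm (hRQ ▸ hQ'R)

/-- A maximal degenerate polygon `Q` in `P` has the maximality
property: any degenerately-contained interpolating polygon `Q'` between `Q` and `P`
has the same convex hull as `Q`. -/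
theorem statement9 (n : ℕ) (hn : 3 ≤ n) [NeZero n] (P : Fin n → Pt) (hP : CCW P)
    (Q : Fin (n - 1) → Pt) (hQ : MaxDegen P Q)
    (N : ℕ) (Q' : Fin N → Pt)
    (h1 : hull Q ⊆ hull Q') (h2 : hull Q' ⊆ hull P)
    (hdeg : ∃ m : ℕ, m < n ∧ ∃ R : Fin m → Pt, hull Q' ⊆ hull R ∧ hull R ⊆ hull P) :
    hull Q = hull Q' :=
  statement9_general n hn P hP Q hQ N Q' h1 hdeg
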